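/- The word ABACABCB is a factor of P^n(A) for some n, but its reflection ACABACBC is not a factor of P^n(A) for any n, where ref swaps B and C and fixes A. -/

import Mathlib

inductive T where
  | A | B | C
deriving DecidableEq, Repr

open T

def P : T → List T
  | A => [A,B,C,B,A,C,B,C,A,B,C,B,A]
  | B => [B,C,A,C,B,A,C,A,B,C,A,C,B]
  | C => [C,A,B,A,C,B,A,B,C,A,B,A,C]

def Pw (w : List T) : List T := w.flatMap P

def SqFree (w : List T) : Prop := ∀ x : List T, x ≠ [] → ¬ (x ++ x) <:+: w

def rot : T → T
  | A => B
  | B => C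
  | C => A

def rotw (w : List T) : List T := w.map rot

def refT : T → T
  | A => A
  | B => C
  | C => B

def reflw (w : List T) : List T := w.map refT

def OccursAt (w v : List T) (i : ℕ) : Prop := (v.drop i).take w.length = w


/-!
Every image `P a` has length 13, so a factor of length at most 14 of `Pw u` lies inside `P a` or
inside `P a ++ P b` for a two-letter factor `[a, b]` of `u`. No word `P^n(A)` repeats a letter,
hence always `a ≠ b`, and a finite check over the six such pairs shows that neither a doubled
letter nor `ACABACBC` fits into these windows. `ABACABCB` already occurs in `P (P A)`.
-/

namespace List

variable {α β : Type*}

theorem infix_append_or_infix_append_of_infix {w x y z : List α} (h : w <:+: x ++ y ++ z)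
    (hw : w.length ≤ y.length + 1) : w <:+: x ++ y ∨ w <:+: y ++ z := by
  obtain ⟨s, t, hst⟩ := h
  simp only [append_assoc] at hst
  by_cases hs : x.length ≤ s.length
  · right
    have hdrop : drop x.length (s ++ (w ++ t)) = y ++ z := by
      rw [hst, drop_left]
    rw [drop_append_of_le_length hs] at hdrop
    exact ⟨_, _, by rw [append_assoc]; exact hdrop⟩
  · left
    have htake : take (s.length + w.length) (x ++ y) = s ++ w := by
      have hend : s.length + w.length - x.length - y.length = 0 := by omega
      rw [← take_left (l₁ := s ++ w) (l₂ := t), append_assoc, hst, ← append_assoc,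
        length_append]
      simp only [take_append, length_append, ← Nat.sub_sub, hend, take_zero, append_nil]
    exact ⟨s, drop (s.length + w.length) (x ++ y), by rw [← htake, take_append_drop]⟩

theorem infix_flatMap_cases {f : α → List β} {w : List β} (hne : w ≠ [])
    (hw : ∀ a, w.length ≤ (f a).length + 1) :
    ∀ {u : List α}, w <:+: u.flatMap f →
      (∃ a ∈ u, w <:+: f a) ∨ ∃ a b, [a, b] <:+: u ∧ w <:+: f a ++ f b
  | [], h => absurd (eq_nil_of_infix_nil h) hne
  | [a], h => Or.inl ⟨a, mem_singleton_self a, by simpa using h⟩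
  | a :: b :: u, h => by
    rw [flatMap_cons, flatMap_cons, ← append_assoc] at h
    rcases infix_append_or_infix_append_of_infix h (hw b) with hab | htail
    · exact Or.inr ⟨a, b, ⟨[], u, rfl⟩, hab⟩
    · rw [← flatMap_cons] at htail
      rcases infix_flatMap_cases hne hw htail with ⟨c, hc, hwc⟩ | ⟨c, d, hcd, hwcd⟩
      · exact Or.inl ⟨c, mem_cons_of_mem a hc, hwc⟩
      · exact Or.inr ⟨c, d, hcd.trans (infix_cons (infix_refl _)), hwcd⟩

theorem isChain_ne_iff_forall_not_infix {l : List α} :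
    l.IsChain (· ≠ ·) ↔ ∀ c, ¬ [c, c] <:+: l := by
  refine ⟨fun h c hc => isChain_pair.mp (h.infix hc) rfl, fun h => ?_⟩
  rw [isChain_iff_forall_rel_of_append_cons_cons]
  rintro a b l₁ l₂ rfl rfl
  exact h a ⟨l₁, l₂, by simp⟩

end List

instance : Fintype T := ⟨{A, B, C}, fun x => by cases x <;> simp⟩

theorem P_length (a : T) : (P a).length = 13 := by
  cases a <;> rfl

theorem not_infix_Pw {u w : List T} (hu : u.IsChain (· ≠ ·)) (hne : w ≠ [])
    (hw : w.length ≤ 14) (hone : ∀ a, ¬ w <:+: P a)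
    (htwo : ∀ a b, a ≠ b → ¬ w <:+: P a ++ P b) : ¬ w <:+: Pw u := fun h => by
  rcases List.infix_flatMap_cases hne (fun a => by rw [P_length]; exact hw) h with
    ⟨a, -, ha⟩ | ⟨a, b, hab, hab'⟩
  · exact hone a ha
  · exact htwo a b (List.isChain_pair.mp (hu.infix hab)) hab'

theorem isChain_ne_Pw {u : List T} (hu : u.IsChain (· ≠ ·)) : (Pw u).IsChain (· ≠ ·) :=
  List.isChain_ne_iff_forall_not_infix.mpr fun c =>
    not_infix_Pw hu (List.cons_ne_nil _ _) (by simp) (by revert c; decide) (by revert c; decide)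

theorem isChain_ne_iterate_Pw {u : List T} (hu : u.IsChain (· ≠ ·)) (n : ℕ) :
    (Pw^[n] u).IsChain (· ≠ ·) := by
  induction n with
  | zero => exact hu
  | succ n ih => rw [Function.iterate_succ_apply']; exact isChain_ne_Pw ih

theorem stmt9 :
    (∃ n : ℕ, [A,B,A,C,A,B,C,B] <:+: Pw^[n] [A]) ∧
    (∀ n : ℕ, ¬ [A,C,A,B,A,C,B,C] <:+: Pw^[n] [A]) := by
  refine ⟨⟨2, by decide +kernel⟩, fun n => ?_⟩
  cases n with
  | zero => decide
  | succ n =>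
    rw [Function.iterate_succ_apply']
    exact not_infix_Pw (isChain_ne_iterate_Pw (List.isChain_singleton A) n)
      (List.cons_ne_nil _ _) (by simp) (by decide) (by decide)
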